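/- arXiv:1406.3679 — 4 statements merged into one kernel-verified Lean document; each statement's English description precedes it below -/
import Mathlib

section
/- For all integers n₁, n₂ ≥ 1, the second distance eigenvalue of the graph K₁∨(K_{n₁}∪K_{n₂}) lies in the open interval (−1, −0.5858). -/
/-- The distance matrix of a graph `G`, with real entries: the `(u,v)` entry is the
distance between `u` and `v` in `G`. -/
noncomputable def distMatrix {V : Type*} [Fintype V] (G : SimpleGraph V) : Matrix V V ℝ :=
  Matrix.of fun u v => (G.dist u v : ℝ)

/-- The distance matrix is real symmetric (Hermitian). -/
theorem distMatrix_isHermitian {V : Type*} [Fintype V] (G : SimpleGraph V) :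
    (distMatrix G).IsHermitian := by
  unfold Matrix.IsHermitian
  ext u v
  simp [distMatrix, Matrix.conjTranspose_apply, SimpleGraph.dist_comm]

/-- The multiset of eigenvalues of the distance matrix of `G` (with multiplicity). -/
noncomputable def distEigMultiset {V : Type*} [Fintype V] [DecidableEq V]
    (G : SimpleGraph V) : Multiset ℝ :=
  Finset.univ.val.map (distMatrix_isHermitian G).eigenvalues

/-- `distEig G k` is `λ_k(G)`, the `k`-th distance eigenvalue of `G` (1-indexed),
where the distance eigenvalues are arranged in non-increasing order. -/
noncomputable def distEig {V : Type*} [Fintype V] [DecidableEq V]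
    (G : SimpleGraph V) (k : ℕ) : ℝ :=
  (((distEigMultiset G).sort (· ≤ ·)).reverse).getD (k - 1) 0

/-- The disjoint union `G ∪ H` of two vertex-disjoint graphs. -/
def graphSum {α β : Type*} (G : SimpleGraph α) (H : SimpleGraph β) : SimpleGraph (α ⊕ β) where
  Adj x y :=
    match x, y with
    | Sum.inl a, Sum.inl b => G.Adj a b
    | Sum.inr a, Sum.inr b => H.Adj a b
    | _, _ => False
  symm := by
    constructor
    rintro (a | a) (b | b) h
    · exact G.adj_symm h
    · exact h
    · exact h
    · exact H.adj_symm h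
  loopless := by
    constructor
    rintro (a | a) h
    · exact G.irrefl h
    · exact H.irrefl h

/-- The join `G ∨ H` of two vertex-disjoint graphs: their disjoint union together with
all edges joining a vertex of `G` and a vertex of `H`. -/
def graphJoin {α β : Type*} (G : SimpleGraph α) (H : SimpleGraph β) : SimpleGraph (α ⊕ β) where
  Adj x y :=
    match x, y with
    | Sum.inl a, Sum.inl b => G.Adj a b
    | Sum.inr a, Sum.inr b => H.Adj a b
    | Sum.inl _, Sum.inr _ => True
    | Sum.inr _, Sum.inl _ => True
  symm := by
    constructor
    rintro (a | a) (b | b) h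
    · exact G.adj_symm h
    · trivial
    · trivial
    · exact H.adj_symm h
  loopless := by
    constructor
    rintro (a | a) h
    · exact G.irrefl h
    · exact H.irrefl h

/-- `K₁ ∨ (K_{n₁} ∪ K_{n₂})`. -/
def joinCliques2 (n₁ n₂ : ℕ) : SimpleGraph (Fin 1 ⊕ (Fin n₁ ⊕ Fin n₂)) :=
  graphJoin ⊤ (graphSum ⊤ ⊤)

/-- `K₁ ∨ (K_{n₁} ∪ K_{n₂} ∪ K_{n₃})`. -/
def joinCliques3 (n₁ n₂ n₃ : ℕ) : SimpleGraph (Fin 1 ⊕ (Fin n₁ ⊕ (Fin n₂ ⊕ Fin n₃))) :=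
  graphJoin ⊤ (graphSum ⊤ (graphSum ⊤ ⊤))

/-- `K₁ ∨ (K_{n₁} ∪ K_{n₂} ∪ K_{n₃} ∪ K_{n₄})`. -/
def joinCliques4 (n₁ n₂ n₃ n₄ : ℕ) :
    SimpleGraph (Fin 1 ⊕ (Fin n₁ ⊕ (Fin n₂ ⊕ (Fin n₃ ⊕ Fin n₄)))) :=
  graphJoin ⊤ (graphSum ⊤ (graphSum ⊤ (graphSum ⊤ ⊤)))

/-!
The matrix `D + I`, where `D` is the distance matrix of `K₁ ∨ (K_{n₁} ∪ K_{n₂})`, is constant on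
the blocks of the partition into the centre and the two cliques, so it has rank at most 3 and
`-1` is a distance eigenvalue of multiplicity at least `n₁ + n₂ - 2`. Lifting eigenvectors of the
`3 × 3` quotient matrix to block-constant vectors, its three eigenvalues, the roots of
`(t - n₁ - n₂)(t + 1)² - n₁n₂(3t + 2)`, are distance eigenvalues as well; this accounts for all
`n₁ + n₂ + 1` of them. By the intermediate value theorem the roots lie in `(-∞, -1)`,
`(-1, -2/3)` and `(0, ∞)`, so `λ₂` is the middle root.
-/

open Matrix Finset

namespace Matrix

theorem rank_lt_card_width_of_mulVec_eq_zero {m n K : Type*} [Fintype n] [Field K]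
    {N : Matrix m n K} {x : n → K} (hx : x ≠ 0) (h : N *ᵥ x = 0) :
    N.rank < Fintype.card n := by
  have hker : 0 < Module.finrank K (LinearMap.ker N.mulVecLin) :=
    Module.finrank_pos_iff_exists_ne_zero.mpr ⟨⟨x, h⟩, fun h0 => hx congr($h0.1)⟩
  have := LinearMap.finrank_range_add_finrank_ker N.mulVecLin
  rw [Module.finrank_fintype_fun_eq_card] at this
  change Module.finrank K (LinearMap.range N.mulVecLin) < _
  omega

theorem rank_submatrix_le_card {m n ι κ R : Type*} [Fintype n] [Fintype κ] [CommRing R]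
    [StrongRankCondition R] (C : Matrix ι κ R) (f : m → ι) (g : n → κ) :
    (C.submatrix f g).rank ≤ Fintype.card κ := by
  classical
  rw [← C.mul_one, submatrix_mul C 1 f id g Function.bijective_id]
  exact (rank_mul_le_left _ _).trans (rank_le_card_width _)

theorem submatrix_mulVec_comp {m n ι R : Type*} [Fintype n] [Fintype ι] [DecidableEq ι]
    [CommSemiring R] (C : Matrix ι ι R) (f : m → ι) (g : n → ι) (w : ι → R) :
    C.submatrix f g *ᵥ (w ∘ g) = ((C * diagonal fun k => (#{v | g v = k} : R)) *ᵥ w) ∘ f := by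
  ext u
  simp only [mulVec, dotProduct, submatrix_apply, Function.comp_apply, mul_diagonal]
  rw [← Finset.sum_fiberwise Finset.univ g]
  refine Finset.sum_congr rfl fun k _ => ?_
  rw [Finset.sum_congr rfl fun v hv => by rw [(Finset.mem_filter.mp hv).2], Finset.sum_const,
    nsmul_eq_mul]
  ring

end Matrix

namespace Matrix.IsHermitian

variable {𝕜 n : Type*} [RCLike 𝕜] [Fintype n] [DecidableEq n] {A : Matrix n n 𝕜}

theorem rank_sub_smul_one (hA : A.IsHermitian) (μ : ℝ) :
    (A - (μ : 𝕜) • 1).rank = Fintype.card {i // hA.eigenvalues i ≠ μ} := by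
  have h : A - (μ : 𝕜) • 1 = Unitary.conjStarAlgAut 𝕜 _ hA.eigenvectorUnitary
      (diagonal (RCLike.ofReal ∘ hA.eigenvalues) - (μ : 𝕜) • 1) := by
    conv_lhs => rw [hA.spectral_theorem]
    simp only [map_sub, map_smul, map_one]
  rw [h, Unitary.conjStarAlgAut_apply, ← Unitary.coe_star, ← diagonal_one, ← diagonal_smul,
    diagonal_sub]
  simp [-isUnit_iff_ne_zero, -Unitary.coe_star, rank_diagonal, sub_eq_zero]

theorem count_eigenvalues_add_rank_sub_smul_one (hA : A.IsHermitian) (μ : ℝ) :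
    (univ.val.map hA.eigenvalues).count μ + (A - (μ : 𝕜) • 1).rank = Fintype.card n := by
  rw [rank_sub_smul_one, Multiset.count_map, Fintype.card_subtype, ← Finset.filter_val,
    Finset.card_val, add_comm]
  simpa [eq_comm] using Finset.card_filter_add_card_filter_not (s := univ) (hA.eigenvalues · ≠ μ)

theorem mem_eigenvalues_of_mulVec_eq_smul (hA : A.IsHermitian) {μ : ℝ} {x : n → 𝕜}
    (hx : x ≠ 0) (h : A *ᵥ x = (μ : 𝕜) • x) : μ ∈ univ.val.map hA.eigenvalues := by
  have hrank := rank_lt_card_width_of_mulVec_eq_zero hx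
    (by rw [sub_mulVec, smul_mulVec, one_mulVec, h, sub_self] : (A - (μ : 𝕜) • 1) *ᵥ x = 0)
  rw [← Multiset.count_pos]
  have := hA.count_eigenvalues_add_rank_sub_smul_one μ
  omega

theorem replicate_le_eigenvalues_of_rank_le (hA : A.IsHermitian) {μ : ℝ} {k : ℕ}
    (h : (A - (μ : 𝕜) • 1).rank ≤ k) :
    Multiset.replicate (Fintype.card n - k) μ ≤ univ.val.map hA.eigenvalues := by
  rw [← Multiset.le_count_iff_replicate_le]
  have := hA.count_eigenvalues_add_rank_sub_smul_one μ
  omega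

end Matrix.IsHermitian

namespace Multiset

variable {α : Type*} [LinearOrder α]

theorem reverse_sort_le_eq_sort_ge (s : Multiset α) :
    (s.sort (· ≤ ·)).reverse = s.sort (· ≥ ·) :=
  List.Perm.eq_of_pairwise' (r := (· ≥ ·)) (List.pairwise_reverse.mpr (s.pairwise_sort _))
    (s.pairwise_sort _) (by rw [← coe_eq_coe, sort_eq, coe_reverse, sort_eq])

theorem getD_reverse_sort_cons_cons_one {a b : α} {s : Multiset α} (hba : b ≤ a)
    (hs : ∀ c ∈ s, c ≤ b) (d : α) : ((a ::ₘ b ::ₘ s).sort (· ≤ ·)).reverse.getD 1 d = b := by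
  have ha : ∀ c ∈ b ::ₘ s, a ≥ c := by simpa using ⟨hba, fun c hc => (hs c hc).trans hba⟩
  rw [reverse_sort_le_eq_sort_ge, sort_cons _ _ _ ha, sort_cons _ _ _ hs]
  rfl

end Multiset

theorem SimpleGraph.dist_eq_of_forall_adj {V : Type*} [DecidableEq V] {G : SimpleGraph V}
    [DecidableRel G.Adj] {c : V} (hc : ∀ v, v ≠ c → G.Adj c v) {u v : V} :
    G.dist u v = if u = v then 0 else if G.Adj u v then 1 else 2 := by
  split_ifs with huv hadj
  · rw [huv, dist_self]
  · exact dist_eq_one_iff_adj.mpr hadj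
  · have hu : u ≠ c := by rintro rfl; exact hadj (hc v (Ne.symm huv))
    have hv : v ≠ c := by rintro rfl; exact hadj (hc u huv).symm
    have h2 : G.edist u v = 2 := edist_eq_two_iff.mpr
      ⟨huv, hadj, c, G.mem_commonNeighbors.mpr ⟨(hc u hu).symm, (hc v hv).symm⟩⟩
    simp [SimpleGraph.dist, h2]

def joinCliques2Block (a b : ℕ) : Fin 1 ⊕ (Fin a ⊕ Fin b) → Fin 3 :=
  Sum.elim (fun _ => 0) (Sum.elim (fun _ => 1) (fun _ => 2))

theorem distMatrix_joinCliques2 (a b : ℕ) :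
    distMatrix (joinCliques2 a b) =
      (!![1, 1, 1; 1, 1, 2; 1, 2, 1] : Matrix (Fin 3) (Fin 3) ℝ).submatrix
        (joinCliques2Block a b) (joinCliques2Block a b) - 1 := by
  classical
  have hcenter : ∀ w, w ≠ Sum.inl 0 → (joinCliques2 a b).Adj (Sum.inl 0) w := by
    rintro (x | w) hw
    · exact absurd (congrArg Sum.inl (Subsingleton.elim x 0)) hw
    · trivial
  ext u v
  rw [distMatrix, Matrix.of_apply, SimpleGraph.dist_eq_of_forall_adj hcenter]
  by_cases huv : u = v
  · subst huv
    rcases u with _ | _ | _ <;> simp [joinCliques2Block]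
  · rcases u with x | i | i <;> rcases v with y | j | j <;>
      simp_all [joinCliques2, graphJoin, graphSum, joinCliques2Block, one_apply]

theorem joinCliques2Block_surjective {a b : ℕ} (ha : 1 ≤ a) (hb : 1 ≤ b) :
    (joinCliques2Block a b).Surjective := by
  intro k
  fin_cases k
  exacts [⟨Sum.inl 0, rfl⟩, ⟨Sum.inr (Sum.inl ⟨0, ha⟩), rfl⟩, ⟨Sum.inr (Sum.inr ⟨0, hb⟩), rfl⟩]

theorem card_joinCliques2Block_fiber (a b : ℕ) :
    (fun k => (#{v | joinCliques2Block a b v = k} : ℝ)) = ![1, (a : ℝ), b] := by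
  ext k
  fin_cases k <;> simp only [Finset.card_filter, Fintype.sum_sum_type] <;> simp [joinCliques2Block]

/-- `-det (Q - t • 1)`, where `Q = !![0, a, b; 1, a - 1, 2 * b; 1, 2 * a, b - 1]` is the quotient
matrix of the distance matrix of `joinCliques2 a b` for the partition into the centre and the two
cliques. -/
def joinCliques2Cubic (a b : ℕ) (t : ℝ) : ℝ :=
  (t - a - b) * (t + 1) ^ 2 - a * b * (3 * t + 2)

theorem exists_distMatrix_joinCliques2_mulVec_eq_smul {a b : ℕ} (ha : 1 ≤ a) (hb : 1 ≤ b)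
    {t : ℝ} (ht : joinCliques2Cubic a b t = 0) :
    ∃ x ≠ 0, distMatrix (joinCliques2 a b) *ᵥ x = t • x := by
  set M := (!![1, 1, 1; 1, 1, 2; 1, 2, 1] : Matrix (Fin 3) (Fin 3) ℝ) *
    diagonal fun k => (#{v | joinCliques2Block a b v = k} : ℝ)
  have hM : M = !![1, (a : ℝ), b; 1, a, 2 * b; 1, 2 * a, b] := by
    ext i j
    simp only [M, mul_diagonal, card_joinCliques2Block_fiber]
    fin_cases i <;> fin_cases j <;> simp [mul_comm]
  have hdet : (M - (1 + t) • 1).det = 0 := by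
    rw [joinCliques2Cubic] at ht
    rw [hM, det_fin_three]
    simp
    linear_combination -ht
  obtain ⟨w, hw0, hw⟩ := exists_mulVec_eq_zero_iff.mpr hdet
  refine ⟨w ∘ joinCliques2Block a b,
    ((joinCliques2Block_surjective ha hb).injective_comp_right).ne hw0, ?_⟩
  rw [sub_mulVec, smul_mulVec, one_mulVec, sub_eq_zero] at hw
  rw [distMatrix_joinCliques2, sub_mulVec, one_mulVec, submatrix_mulVec_comp, hw]
  ext v
  simp only [Pi.sub_apply, Function.comp_apply, Pi.smul_apply, smul_eq_mul]
  ring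

theorem exists_joinCliques2Cubic_roots {a b : ℕ} (ha : 1 ≤ a) (hb : 1 ≤ b) :
    ∃ r₁ r₂ r₃ : ℝ, joinCliques2Cubic a b r₁ = 0 ∧ joinCliques2Cubic a b r₂ = 0 ∧
      joinCliques2Cubic a b r₃ = 0 ∧ r₁ < -1 ∧ -1 < r₂ ∧ r₂ < -2 / 3 ∧ 0 < r₃ := by
  have hA : (1 : ℝ) ≤ a := by exact_mod_cast ha
  have hB : (1 : ℝ) ≤ b := by exact_mod_cast hb
  set g := joinCliques2Cubic a b
  have hg : Continuous g := by unfold g joinCliques2Cubic; fun_prop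
  have hleft : g (-(a + b + 2)) < 0 := by
    unfold g joinCliques2Cubic
    nlinarith [mul_nonneg (by positivity : (0 : ℝ) ≤ 3 * (a + b) + 4) (sq_nonneg ((a : ℝ) - b))]
  have hneg_one : 0 < g (-1) := by unfold g joinCliques2Cubic; nlinarith
  have hmid : g (-2 / 3) < 0 := by unfold g joinCliques2Cubic; nlinarith
  have hzero : g 0 < 0 := by unfold g joinCliques2Cubic; nlinarith
  have hright : 0 < g (a + b + 3 * a * b) := by
    have : g (a + b + 3 * a * b) =
        a * b * (3 * (a + b + 3 * a * b) ^ 2 + 3 * (a + b + 3 * a * b) + 1) := by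
      unfold g joinCliques2Cubic; ring
    rw [this]
    positivity
  obtain ⟨r₁, ⟨-, hr₁⟩, hg₁⟩ :=
    intermediate_value_Ioo (by linarith) hg.continuousOn ⟨hleft, hneg_one⟩
  obtain ⟨r₂, ⟨hr₂, hr₂'⟩, hg₂⟩ :=
    intermediate_value_Ioo' (by norm_num) hg.continuousOn ⟨hmid, hneg_one⟩
  obtain ⟨r₃, ⟨hr₃, -⟩, hg₃⟩ :=
    intermediate_value_Ioo (by positivity) hg.continuousOn ⟨hzero, hright⟩
  exact ⟨r₁, r₂, r₃, hg₁, hg₂, hg₃, hr₁, hr₂, hr₂', hr₃⟩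

theorem distEigMultiset_joinCliques2 {a b : ℕ} (ha : 1 ≤ a) (hb : 1 ≤ b) {r₁ r₂ r₃ : ℝ}
    (hg₁ : joinCliques2Cubic a b r₁ = 0) (hg₂ : joinCliques2Cubic a b r₂ = 0)
    (hg₃ : joinCliques2Cubic a b r₃ = 0) (h₁ : r₁ < -1) (h₂ : -1 < r₂) (h₂₃ : r₂ < r₃) :
    distEigMultiset (joinCliques2 a b) =
      r₃ ::ₘ r₂ ::ₘ r₁ ::ₘ Multiset.replicate (a + b - 2) (-1) := by
  have hD := distMatrix_isHermitian (joinCliques2 a b)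
  have hmem {r : ℝ} (hr : joinCliques2Cubic a b r = 0) : r ∈ distEigMultiset (joinCliques2 a b) :=
    have ⟨_, hx, h⟩ := exists_distMatrix_joinCliques2_mulVec_eq_smul ha hb hr
    hD.mem_eigenvalues_of_mulVec_eq_smul hx h
  have hrank : (distMatrix (joinCliques2 a b) - (-1 : ℝ) • 1).rank ≤ 3 := by
    rw [distMatrix_joinCliques2, neg_one_smul, sub_neg_eq_add, sub_add_cancel]
    exact rank_submatrix_le_card _ _ _
  have hrep := hD.replicate_le_eigenvalues_of_rank_le hrank
  rw [Fintype.card_sum, Fintype.card_sum, Fintype.card_fin, Fintype.card_fin, Fintype.card_fin,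
    show 1 + (a + b) - 3 = a + b - 2 by omega] at hrep
  refine (Multiset.eq_of_le_of_card_le ?_ ?_).symm
  · rw [Multiset.cons_le_of_notMem, Multiset.cons_le_of_notMem, Multiset.cons_le_of_notMem]
    · exact ⟨hmem hg₃, hmem hg₂, hmem hg₁, hrep⟩
    all_goals
      simp only [Multiset.mem_cons, Multiset.mem_replicate]
      grind
  · simp [distEigMultiset]
    omega

theorem secondDistEig_joinCliques2 (n₁ n₂ : ℕ) (h₁ : 1 ≤ n₁) (h₂ : 1 ≤ n₂) :
    distEig (joinCliques2 n₁ n₂) 2 ∈ Set.Ioo (-1 : ℝ) (-0.5858) := by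
  obtain ⟨r₁, r₂, r₃, hg₁, hg₂, hg₃, hr₁, hr₂, hr₂', hr₃⟩ := exists_joinCliques2Cubic_roots h₁ h₂
  have hsecond : distEig (joinCliques2 n₁ n₂) 2 = r₂ := by
    rw [distEig, distEigMultiset_joinCliques2 h₁ h₂ hg₁ hg₂ hg₃ hr₁ hr₂ (by linarith)]
    refine Multiset.getD_reverse_sort_cons_cons_one (by linarith) ?_ 0
    simp only [Multiset.mem_cons, Multiset.mem_replicate]
    rintro c (rfl | ⟨-, rfl⟩) <;> linarith
  rw [hsecond]
  exact ⟨hr₂, by linarith [show (-2 / 3 : ℝ) < -0.5858 by norm_num]⟩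
end

section
/- For all integers n₁, n₂, n₃ ≥ 1, the second distance eigenvalue of the graph K₁∨(K_{n₁}∪K_{n₂}∪K_{n₃}) lies in the open interval (−1, −0.5858). -/
/-!
Write `c` for the centre of `K₁ ∨ (K_{n₁} ∪ K_{n₂} ∪ K_{n₃})`. Two distinct vertices are at
distance `1` if they lie in the same clique or one of them is `c`, and at distance `2` otherwise,
so `D = B(part, part) - I` for an explicit `4 × 4` matrix `B` indexed by the parts `{c}` and the
three cliques. Hence `xᵀ D x = sᵀ B s - ‖x‖²`, where `s` collects the sums of `x` over the parts.

Both bounds are Courant–Fischer arguments. On the hyperplane `x_c + 1.7 ∑_{v ≠ c} x_v = 0` the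
quadratic form is `< -0.5858 ‖x‖²` (using `‖x‖² ≥ x_c²`), so at most one eigenvalue is
`≥ -0.5858`. On the plane spanned by `e_c` and `e_{v₁} + e_{v₂}`, with `v₁, v₂` in different
cliques, it is `> -‖x‖²`, so at least two eigenvalues exceed `-1`.
-/

open Matrix Finset

lemma exists_mul_add_mul_eq_zero (p q : ℝ) : ∃ a b : ℝ, (a ≠ 0 ∨ b ≠ 0) ∧ a * p + b * q = 0 := by
  by_cases hp : p = 0
  · exact ⟨1, 0, Or.inl one_ne_zero, by simp [hp]⟩
  · exact ⟨q, -p, Or.inr (neg_ne_zero.mpr hp), by ring⟩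

namespace Matrix.IsHermitian

variable {ι : Type*} [Fintype ι] [DecidableEq ι] {M : Matrix ι ι ℝ} (hM : M.IsHermitian)

lemma dotProduct_eigenvectorBasis (i j : ι) :
    ⇑(hM.eigenvectorBasis i) ⬝ᵥ ⇑(hM.eigenvectorBasis j) = if i = j then 1 else 0 := by
  rw [← orthonormal_iff_ite.mp hM.eigenvectorBasis.orthonormal i j,
    EuclideanSpace.inner_eq_star_dotProduct, star_trivial, dotProduct_comm]

lemma eigenvectorBasis_dotProduct_mulVec (i : ι) (x : ι → ℝ) :
    ⇑(hM.eigenvectorBasis i) ⬝ᵥ (M *ᵥ x) = hM.eigenvalues i * (⇑(hM.eigenvectorBasis i) ⬝ᵥ x) := by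
  rw [dotProduct_mulVec, ← mulVec_transpose, ← conjTranspose_eq_transpose_of_trivial, hM.eq,
    hM.mulVec_eigenvectorBasis, smul_dotProduct, smul_eq_mul]

lemma dotProduct_eq_sum_eigenvectorBasis (x y : ι → ℝ) :
    x ⬝ᵥ y = ∑ i, (⇑(hM.eigenvectorBasis i) ⬝ᵥ x) * (⇑(hM.eigenvectorBasis i) ⬝ᵥ y) := by
  have := hM.eigenvectorBasis.sum_inner_mul_inner (WithLp.toLp 2 x) (WithLp.toLp 2 y)
  simp only [EuclideanSpace.inner_eq_star_dotProduct, star_trivial] at this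
  simp_rw [dotProduct_comm y] at this
  exact this.symm

lemma dotProduct_mulVec_eq_sum_eigenvalues (x : ι → ℝ) :
    x ⬝ᵥ (M *ᵥ x) = ∑ i, hM.eigenvalues i * (⇑(hM.eigenvectorBasis i) ⬝ᵥ x) ^ 2 := by
  simp_rw [hM.dotProduct_eq_sum_eigenvectorBasis x, eigenvectorBasis_dotProduct_mulVec]
  exact sum_congr rfl fun i _ => by ring

lemma dotProduct_self_eq_sum_eigenvectorBasis (x : ι → ℝ) :
    x ⬝ᵥ x = ∑ i, (⇑(hM.eigenvectorBasis i) ⬝ᵥ x) ^ 2 := by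
  simp_rw [hM.dotProduct_eq_sum_eigenvectorBasis x x, sq]

lemma card_filter_le_eigenvalues_le_one {w : ι → ℝ} {c : ℝ}
    (h : ∀ x, x ≠ 0 → w ⬝ᵥ x = 0 → x ⬝ᵥ (M *ᵥ x) < c * (x ⬝ᵥ x)) :
    #{i | c ≤ hM.eigenvalues i} ≤ 1 := by
  refine card_le_one.mpr fun i hi j hj => by_contra fun hij => ?_
  simp only [mem_filter, mem_univ, true_and] at hi hj
  set u := ⇑(hM.eigenvectorBasis i)
  set v := ⇑(hM.eigenvectorBasis j)
  obtain ⟨a, b, hab, hw⟩ := exists_mul_add_mul_eq_zero (w ⬝ᵥ u) (w ⬝ᵥ v)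
  have hnorm : (a • u + b • v) ⬝ᵥ (a • u + b • v) = a ^ 2 + b ^ 2 := by
    simp only [dotProduct_add, dotProduct_smul, add_dotProduct, smul_dotProduct, u, v,
      dotProduct_eigenvectorBasis, if_pos, if_neg hij, if_neg (Ne.symm hij), smul_eq_mul]
    ring
  have hform : (a • u + b • v) ⬝ᵥ (M *ᵥ (a • u + b • v))
      = a ^ 2 * hM.eigenvalues i + b ^ 2 * hM.eigenvalues j := by
    simp only [mulVec_add, mulVec_smul, u, v, mulVec_eigenvectorBasis, dotProduct_add,
      dotProduct_smul, add_dotProduct, smul_dotProduct, dotProduct_eigenvectorBasis, if_pos,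
      if_neg hij, if_neg (Ne.symm hij), smul_eq_mul]
    ring
  have hpos : 0 < a ^ 2 + b ^ 2 := by rcases hab with hab | hab <;> positivity
  have hne : a • u + b • v ≠ 0 := fun h0 => by simp [h0] at hnorm; linarith
  have := h _ hne (by simpa [dotProduct_add] using hw)
  rw [hform, hnorm] at this
  nlinarith

lemma one_lt_card_filter_lt_eigenvalues {x y : ι → ℝ} {c : ℝ}
    (h : ∀ a b : ℝ, (a ≠ 0 ∨ b ≠ 0) →
      c * ((a • x + b • y) ⬝ᵥ (a • x + b • y)) < (a • x + b • y) ⬝ᵥ (M *ᵥ (a • x + b • y))) :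
    1 < #{i | c < hM.eigenvalues i} := by
  have : Nonempty ι := by
    by_contra hι
    rw [not_nonempty_iff] at hι
    simpa [dotProduct] using h 1 0 (Or.inl one_ne_zero)
  by_contra! hcard
  obtain ⟨i₀, hi₀⟩ := card_le_one_iff_subset_singleton.mp hcard
  set u := ⇑(hM.eigenvectorBasis i₀)
  obtain ⟨a, b, hab, hu⟩ := exists_mul_add_mul_eq_zero (u ⬝ᵥ x) (u ⬝ᵥ y)
  set z := a • x + b • y
  have huz : u ⬝ᵥ z = 0 := by simpa [z, dotProduct_add] using hu
  have hle : z ⬝ᵥ (M *ᵥ z) ≤ c * (z ⬝ᵥ z) := by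
    rw [hM.dotProduct_mulVec_eq_sum_eigenvalues, hM.dotProduct_self_eq_sum_eigenvectorBasis,
      mul_sum]
    refine sum_le_sum fun i _ => ?_
    by_cases hi : i = i₀
    · simp [hi, u, huz]
    · have : ¬ c < hM.eigenvalues i := fun hlt => hi (by simpa using hi₀ (by simpa using hlt))
      exact mul_le_mul_of_nonneg_right (not_lt.mp this) (sq_nonneg _)
  exact absurd (h a b hab) (not_lt.mpr hle)

end Matrix.IsHermitian

namespace List

variable {l : List ℝ}

lemma countP_getD_one_lt_le_one (hl : l.Pairwise (· ≥ ·)) :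
    l.countP (fun x => l.getD 1 0 < x) ≤ 1 := by
  match l, hl with
  | [], _ => simp
  | [a], _ => simp only [getD_cons_succ, getD_nil, countP_singleton]; split <;> omega
  | a :: b :: t, hl =>
    have ht : t.countP (fun x => b < x) = 0 := countP_eq_zero.mpr fun x hx => by
      simpa using (pairwise_cons.mp (pairwise_cons.mp hl).2).1 x hx
    rw [getD_cons_succ, getD_cons_zero, countP_cons, countP_cons_of_neg (by simp), ht, zero_add]
    split <;> omega

lemma two_le_countP_getD_one_le (hl : l.Pairwise (· ≥ ·)) (hlen : 1 < l.length) :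
    2 ≤ l.countP (fun x => l.getD 1 0 ≤ x) := by
  match l, hl, hlen with
  | a :: b :: t, hl, _ =>
    have hab : b ≤ a := (pairwise_cons.mp hl).1 b (by simp)
    simp [hab]

end List

namespace Multiset

variable {m : Multiset ℝ} {c : ℝ}

lemma lt_sort_reverse_getD_one (h : 1 < m.countP (c < ·)) :
    c < (m.sort (· ≤ ·)).reverse.getD 1 0 := by
  rw [← m.sort_eq (· ≤ ·), ← coe_reverse, coe_countP] at h
  set l := (m.sort (· ≤ ·)).reverse
  have hl : l.Pairwise (· ≥ ·) := List.pairwise_reverse.mpr (m.pairwise_sort _)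
  by_contra! hc
  have : l.countP (fun x => c < x) ≤ l.countP (fun x => l.getD 1 0 < x) :=
    List.countP_mono_left fun x _ hx => by simp only [decide_eq_true_eq] at hx ⊢; linarith
  have := List.countP_getD_one_lt_le_one hl
  omega

lemma sort_reverse_getD_one_lt (hm : 1 < card m) (h : m.countP (c ≤ ·) ≤ 1) :
    (m.sort (· ≤ ·)).reverse.getD 1 0 < c := by
  rw [← m.sort_eq (· ≤ ·), ← coe_reverse, coe_countP] at h
  rw [← m.sort_eq (· ≤ ·), ← coe_reverse, coe_card] at hm
  set l := (m.sort (· ≤ ·)).reverse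
  have hl : l.Pairwise (· ≥ ·) := List.pairwise_reverse.mpr (m.pairwise_sort _)
  by_contra! hc
  have : l.countP (fun x => l.getD 1 0 ≤ x) ≤ l.countP (fun x => c ≤ x) :=
    List.countP_mono_left fun x _ hx => by simp only [decide_eq_true_eq] at hx ⊢; linarith
  have := List.two_le_countP_getD_one_le hl hm
  omega

end Multiset

lemma countP_distEigMultiset {V : Type*} [Fintype V] [DecidableEq V] (G : SimpleGraph V)
    (p : ℝ → Prop) [DecidablePred p] :
    (distEigMultiset G).countP p = #{i | p ((distMatrix_isHermitian G).eigenvalues i)} := by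
  rw [distEigMultiset, Multiset.countP_map]
  rfl

namespace SimpleGraph

variable {V : Type*} {G : SimpleGraph V}

lemma dist_eq_two_of_adj_of_adj {u v w : V} (huv : u ≠ v) (hadj : ¬G.Adj u v)
    (huw : G.Adj u w) (hwv : G.Adj w v) : G.dist u v = 2 := by
  rw [dist, edist_eq_two_iff.mpr ⟨huv, hadj, w, (G.mem_commonNeighbors).mpr ⟨huw, hwv.symm⟩⟩]
  rfl

open Classical in
lemma dist_eq_ite_of_forall_adj {w : V} (hw : ∀ v, v ≠ w → G.Adj w v) (u v : V) :
    G.dist u v = if u = v then 0 else if G.Adj u v then 1 else 2 := by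
  split_ifs with huv hadj
  · simp [huv]
  · exact dist_eq_one_iff_adj.mpr hadj
  · have hu : u ≠ w := fun h => hadj (h ▸ hw v fun h' => huv (h.trans h'.symm))
    have hv : v ≠ w := fun h => hadj (h ▸ (hw u fun h' => huv (h'.trans h.symm)).symm)
    exact dist_eq_two_of_adj_of_adj huv hadj (hw u hu).symm (hw v hv)

end SimpleGraph

section FiberSum

variable {V P R : Type*} [Fintype V] [DecidableEq P] [CommSemiring R] (f : V → P)

def fiberSum (x : V → R) (p : P) : R := ∑ u with f u = p, x u

lemma dotProduct_comp_eq_fiberSum_dotProduct [Fintype P] (x : V → R) (g : P → R) :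
    x ⬝ᵥ (g ∘ f) = fiberSum f x ⬝ᵥ g := by
  simp only [dotProduct, fiberSum, Function.comp_apply, sum_mul]
  rw [← sum_fiberwise univ f]
  exact sum_congr rfl fun p _ => sum_congr rfl fun u hu => by rw [(mem_filter.mp hu).2]

lemma submatrix_mulVec_eq_comp [Fintype P] (B : Matrix P P R) (x : V → R) :
    B.submatrix f f *ᵥ x = (B *ᵥ fiberSum f x) ∘ f := by
  ext u
  rw [Function.comp_apply, mulVec, mulVec, dotProduct_comm, dotProduct_comm _ (fiberSum f x),
    ← dotProduct_comp_eq_fiberSum_dotProduct]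
  rfl

lemma dotProduct_submatrix_mulVec [Fintype P] (B : Matrix P P R) (x : V → R) :
    x ⬝ᵥ (B.submatrix f f *ᵥ x) = fiberSum f x ⬝ᵥ (B *ᵥ fiberSum f x) := by
  rw [submatrix_mulVec_eq_comp, dotProduct_comp_eq_fiberSum_dotProduct]

lemma fiberSum_add (x y : V → R) : fiberSum f (x + y) = fiberSum f x + fiberSum f y := by
  ext p
  simp [fiberSum, sum_add_distrib]

lemma fiberSum_smul (a : R) (x : V → R) : fiberSum f (a • x) = a • fiberSum f x := by
  ext p
  simp [fiberSum, mul_sum]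

lemma fiberSum_single [DecidableEq V] (v : V) (a : R) :
    fiberSum f (Pi.single v a) = Pi.single (f v) a := by
  ext p
  simp [fiberSum, Pi.single_apply, eq_comm]

end FiberSum

namespace JoinCliques3

variable {n₁ n₂ n₃ : ℕ}

def part : Fin 1 ⊕ (Fin n₁ ⊕ (Fin n₂ ⊕ Fin n₃)) → Fin 4 :=
  Sum.elim (fun _ => 0) (Sum.elim (fun _ => 1) (Sum.elim (fun _ => 2) (fun _ => 3)))

def partDist : Matrix (Fin 4) (Fin 4) ℝ :=
  !![1, 1, 1, 1; 1, 1, 2, 2; 1, 2, 1, 2; 1, 2, 2, 1]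

lemma center_adj (v : Fin 1 ⊕ (Fin n₁ ⊕ (Fin n₂ ⊕ Fin n₃))) (hv : v ≠ Sum.inl 0) :
    (joinCliques3 n₁ n₂ n₃).Adj (Sum.inl 0) v := by
  rcases v with a | b
  · exact absurd (congrArg Sum.inl (Subsingleton.elim a 0)) hv
  · trivial

lemma distMatrix_eq :
    distMatrix (joinCliques3 n₁ n₂ n₃) = partDist.submatrix part part - 1 := by
  ext u v
  rw [distMatrix, of_apply, SimpleGraph.dist_eq_ite_of_forall_adj center_adj]
  rcases u with a | a | a | a <;> rcases v with b | b | b | b <;>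
    simp +contextual [part, partDist, joinCliques3, graphJoin, graphSum, one_apply, sub_ite]

lemma dotProduct_partDist_mulVec (s : Fin 4 → ℝ) :
    s ⬝ᵥ (partDist *ᵥ s)
      = (s 0 + s 1 + s 2 + s 3) ^ 2 + 2 * (s 1 * s 2 + s 1 * s 3 + s 2 * s 3) := by
  simp only [dotProduct, mulVec, partDist, of_apply, cons_val', cons_val_fin_one, Fin.sum_univ_four,
    cons_val_zero, cons_val_one, Matrix.cons_val]
  ring

lemma dotProduct_distMatrix_mulVec (x : Fin 1 ⊕ (Fin n₁ ⊕ (Fin n₂ ⊕ Fin n₃)) → ℝ) :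
    x ⬝ᵥ (distMatrix (joinCliques3 n₁ n₂ n₃) *ᵥ x)
      = fiberSum part x ⬝ᵥ (partDist *ᵥ fiberSum part x) - x ⬝ᵥ x := by
  rw [distMatrix_eq, sub_mulVec, one_mulVec, dotProduct_sub, dotProduct_submatrix_mulVec]

lemma fiberSum_part_zero (x : Fin 1 ⊕ (Fin n₁ ⊕ (Fin n₂ ⊕ Fin n₃)) → ℝ) :
    fiberSum part x 0 = x (Sum.inl 0) := by
  rw [fiberSum, sum_filter, Fintype.sum_sum_type]
  simp [part]

lemma card_filter_le_eigenvalues_le_one :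
    #{i | -0.5858 ≤ (distMatrix_isHermitian (joinCliques3 n₁ n₂ n₃)).eigenvalues i} ≤ 1 := by
  refine (distMatrix_isHermitian _).card_filter_le_eigenvalues_le_one
    (w := ![1, 17 / 10, 17 / 10, 17 / 10] ∘ part) fun x hx hw => ?_
  rw [dotProduct_comm, dotProduct_comp_eq_fiberSum_dotProduct] at hw
  rw [dotProduct_distMatrix_mulVec, dotProduct_partDist_mulVec]
  have hcenter : x (Sum.inl 0) ^ 2 ≤ x ⬝ᵥ x := by
    rw [sq]
    exact single_le_sum (f := fun u => x u * x u) (fun u _ => mul_self_nonneg _) (mem_univ _)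
  have hpos : 0 < x ⬝ᵥ x :=
    ((sq_nonneg _).trans hcenter).lt_of_ne (Ne.symm (dotProduct_self_eq_zero.not.mpr hx))
  rw [← fiberSum_part_zero x] at hcenter
  simp only [dotProduct, Fin.sum_univ_four, cons_val_zero, cons_val_one, Matrix.cons_val] at hw
  generalize fiberSum part x = s at hw hcenter ⊢
  obtain hs0 : s 0 = -(17 / 10) * (s 1 + s 2 + s 3) := by linarith
  rw [hs0] at hcenter ⊢
  nlinarith [sq_nonneg (s 1 - s 2), sq_nonneg (s 1 - s 3), sq_nonneg (s 2 - s 3)]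

lemma one_lt_card_filter_lt_eigenvalues (h₁ : 1 ≤ n₁) (h₂ : 1 ≤ n₂) :
    1 < #{i | -1 < (distMatrix_isHermitian (joinCliques3 n₁ n₂ n₃)).eigenvalues i} := by
  set x : Fin 1 ⊕ (Fin n₁ ⊕ (Fin n₂ ⊕ Fin n₃)) → ℝ := Pi.single (Sum.inl 0) 1
  set y : Fin 1 ⊕ (Fin n₁ ⊕ (Fin n₂ ⊕ Fin n₃)) → ℝ :=
    Pi.single (Sum.inr (Sum.inl ⟨0, h₁⟩)) 1 + Pi.single (Sum.inr (Sum.inr (Sum.inl ⟨0, h₂⟩))) 1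
  refine (distMatrix_isHermitian _).one_lt_card_filter_lt_eigenvalues (x := x) (y := y)
    fun a b hab => ?_
  suffices 0 < fiberSum part (a • x + b • y) ⬝ᵥ (partDist *ᵥ fiberSum part (a • x + b • y)) by
    rw [dotProduct_distMatrix_mulVec]
    linarith
  have hpos : 0 < a ^ 2 + b ^ 2 := by rcases hab with h | h <;> positivity
  rw [dotProduct_partDist_mulVec]
  simp only [x, y, smul_add, fiberSum_add, fiberSum_smul, fiberSum_single, part, Sum.elim_inl,
    Sum.elim_inr, Pi.add_apply, Pi.smul_apply, Pi.single_eq_same, smul_eq_mul, mul_one, ne_eq,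
    zero_ne_one, one_ne_zero, not_false_eq_true, Pi.single_eq_of_ne, mul_zero, Fin.reduceEq,
    add_zero, zero_add]
  nlinarith [sq_nonneg (2 * a + 5 * b)]

end JoinCliques3

theorem secondDistEig_joinCliques3_general (n₁ n₂ n₃ : ℕ) (h₁ : 1 ≤ n₁) (h₂ : 1 ≤ n₂) :
    distEig (joinCliques3 n₁ n₂ n₃) 2 ∈ Set.Ioo (-1 : ℝ) (-0.5858) := by
  have hlower := JoinCliques3.one_lt_card_filter_lt_eigenvalues (n₃ := n₃) h₁ h₂
  have hupper := JoinCliques3.card_filter_le_eigenvalues_le_one (n₁ := n₁) (n₂ := n₂) (n₃ := n₃)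
  rw [← countP_distEigMultiset] at hlower hupper
  exact ⟨Multiset.lt_sort_reverse_getD_one hlower,
    Multiset.sort_reverse_getD_one_lt (hlower.trans_le (Multiset.countP_le_card _ _)) hupper⟩

theorem secondDistEig_joinCliques3 (n₁ n₂ n₃ : ℕ) (h₁ : 1 ≤ n₁) (h₂ : 1 ≤ n₂) (h₃ : 1 ≤ n₃) :
    distEig (joinCliques3 n₁ n₂ n₃) 2 ∈ Set.Ioo (-1 : ℝ) (-0.5858) :=
  secondDistEig_joinCliques3_general n₁ n₂ n₃ h₁ h₂
end

section
/- For integers n₁, n₂, n₃, n₄ ≥ 1, set n = n₁+n₂+n₃+n₄+1. The characteristic polynomial of the distance matrix of G = K₁∨(K_{n₁}∪K_{n₂}∪K_{n₃}∪K_{n₄}) satisfies det(λI_n − D(G)) = (λ+1)^{n−5}·h(λ), where h(λ) = λ⁵ − (e₁−4)λ⁴ − [3e₂ + 4e₁ − 6]λ³ − [5e₃ + 8e₂ + 6e₁ − 4]λ² − [7e₄ + 8e₃ + 7e₂ + 4e₁ − 1]λ − 4e₄ − 3e₃ − 2e₂ − e₁, with e₁, e₂, e₃, e₄ denoting the elementary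 symmetric polynomials of degree 1, 2, 3, 4 in n₁, n₂, n₃, n₄. -/
open Matrix Finset

theorem Matrix.det_smul_one_sub_mul_comm {m n R : Type*} [Fintype m] [Fintype n]
    [DecidableEq m] [DecidableEq n] [CommRing R]
    (A : Matrix m n R) (B : Matrix n m R) (hle : Fintype.card n ≤ Fintype.card m) (x : R) :
    (x • (1 : Matrix m m R) - A * B).det =
      x ^ (Fintype.card m - Fintype.card n) * (x • (1 : Matrix n n R) - B * A).det := by
  rw [smul_one_eq_diagonal, smul_one_eq_diagonal, ← scalar_apply, ← scalar_apply,
    ← eval_charpoly, ← eval_charpoly, charpoly_mul_comm_of_le A B hle, Polynomial.eval_mul,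
    Polynomial.eval_pow, Polynomial.eval_X]

section Submatrix

variable {l m n R : Type*} [Fintype n] [DecidableEq n] [NonAssocSemiring R]

theorem Matrix.mul_one_submatrix_id (M : Matrix m n R) (p : l → n) :
    M * (1 : Matrix n n R).submatrix id p = M.submatrix id p := by
  ext i j
  simp [Matrix.mul_apply, one_apply]

theorem Matrix.one_submatrix_id_mul_submatrix [Fintype l] (p : l → n) (M : Matrix n m R) :
    (1 : Matrix n n R).submatrix id p * M.submatrix p id =
      diagonal (fun i => (#{u | p u = i} : R)) * M := by
  ext i j
  simp only [Matrix.mul_apply, submatrix_apply, id, one_apply, diagonal_apply, ite_mul, one_mul,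
    zero_mul, Finset.sum_ite_eq, Finset.sum_ite, Finset.sum_const_zero, add_zero,
    Finset.mem_univ, if_true]
  rw [Finset.sum_congr rfl (g := fun _ => M i j) fun u hu => by rw [(Finset.mem_filter.mp hu).2],
    Finset.sum_const, nsmul_eq_mul]
  simp only [eq_comm]

end Submatrix

theorem SimpleGraph.dist_eq_two_of_mem_commonNeighbors {V : Type*} {G : SimpleGraph V}
    {u v w : V} (huv : u ≠ v) (hnadj : ¬G.Adj u v) (hw : w ∈ G.commonNeighbors u v) :
    G.dist u v = 2 := by
  rw [SimpleGraph.dist, ENat.toNat_eq_iff two_ne_zero,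
    SimpleGraph.edist_eq_two_iff.mpr ⟨huv, hnadj, w, hw⟩]
  rfl

section JoinCliques4

variable {n₁ n₂ n₃ n₄ : ℕ}

def cliqueIndex (n₁ n₂ n₃ n₄ : ℕ) : Fin 1 ⊕ (Fin n₁ ⊕ (Fin n₂ ⊕ (Fin n₃ ⊕ Fin n₄))) → Fin 5
  | .inl _ => 0
  | .inr (.inl _) => 1
  | .inr (.inr (.inl _)) => 2
  | .inr (.inr (.inr (.inl _))) => 3
  | .inr (.inr (.inr (.inr _))) => 4

theorem joinCliques4_adj_iff {u v : Fin 1 ⊕ (Fin n₁ ⊕ (Fin n₂ ⊕ (Fin n₃ ⊕ Fin n₄)))} :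
    (joinCliques4 n₁ n₂ n₃ n₄).Adj u v ↔
      u ≠ v ∧ (cliqueIndex n₁ n₂ n₃ n₄ u = cliqueIndex n₁ n₂ n₃ n₄ v ∨
        cliqueIndex n₁ n₂ n₃ n₄ u = 0 ∨ cliqueIndex n₁ n₂ n₃ n₄ v = 0) := by
  rcases u with a | a | a | a | a <;> rcases v with b | b | b | b | b <;>
    simp [joinCliques4, graphJoin, graphSum, cliqueIndex, Fin.ext_iff]

-- The distance between distinct vertices in parts `i` and `j`; part `0` is the apex `K₁`.
def cliqueDist : Matrix (Fin 5) (Fin 5) ℝ :=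
  of fun i j => if i = j ∨ i = 0 ∨ j = 0 then 1 else 2

theorem card_filter_cliqueIndex_eq :
    (fun i => (#{u | cliqueIndex n₁ n₂ n₃ n₄ u = i} : ℝ)) = ![1, (n₁ : ℝ), n₂, n₃, n₄] := by
  ext i
  simp only [Finset.card_filter, Fintype.sum_sum_type, Nat.cast_add]
  fin_cases i <;> simp [cliqueIndex]

theorem distMatrix_joinCliques4 :
    distMatrix (joinCliques4 n₁ n₂ n₃ n₄) =
      cliqueDist.submatrix (cliqueIndex n₁ n₂ n₃ n₄) (cliqueIndex n₁ n₂ n₃ n₄) - 1 := by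
  ext u v
  by_cases huv : u = v
  · subst huv
    simp [distMatrix, cliqueDist]
  rw [distMatrix, of_apply, Matrix.sub_apply, submatrix_apply, one_apply_ne huv, sub_zero]
  by_cases hadj : (joinCliques4 n₁ n₂ n₃ n₄).Adj u v
  · rw [SimpleGraph.dist_eq_one_iff_adj.mpr hadj]
    simp [cliqueDist, (joinCliques4_adj_iff.mp hadj).2]
  have hparts : ¬(_ ∨ _ ∨ _) := fun h => hadj (joinCliques4_adj_iff.mpr ⟨huv, h⟩)
  simp only [not_or] at hparts
  obtain ⟨hne, hu, hv⟩ := hparts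
  have hcenter : Sum.inl 0 ∈ (joinCliques4 n₁ n₂ n₃ n₄).commonNeighbors u v := by
    simp only [SimpleGraph.mem_commonNeighbors, joinCliques4_adj_iff]
    exact ⟨⟨fun h => hu (h ▸ rfl), by simp [cliqueIndex]⟩,
      ⟨fun h => hv (h ▸ rfl), by simp [cliqueIndex]⟩⟩
  rw [SimpleGraph.dist_eq_two_of_mem_commonNeighbors huv hadj hcenter]
  simp [cliqueDist, hne, hu, hv]

end JoinCliques4

theorem det_add_one_smul_one_sub_diagonal_mul_cliqueDist (lam a b c d : ℝ) :
    ((lam + 1) • (1 : Matrix (Fin 5) (Fin 5) ℝ) - diagonal ![1, a, b, c, d] * cliqueDist).det =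
      let e₁ : ℝ := a + b + c + d
      let e₂ : ℝ := a * b + a * c + a * d + b * c + b * d + c * d
      let e₃ : ℝ := a * b * c + a * b * d + a * c * d + b * c * d
      let e₄ : ℝ := a * b * c * d
      lam ^ 5 - (e₁ - 4) * lam ^ 4 - (3 * e₂ + 4 * e₁ - 6) * lam ^ 3
        - (5 * e₃ + 8 * e₂ + 6 * e₁ - 4) * lam ^ 2
        - (7 * e₄ + 8 * e₃ + 7 * e₂ + 4 * e₁ - 1) * lam
        - (4 * e₄ + 3 * e₃ + 2 * e₂ + e₁) := by
  have hentries :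
      (lam + 1) • (1 : Matrix (Fin 5) (Fin 5) ℝ) - diagonal ![1, a, b, c, d] * cliqueDist =
      !![lam, -1, -1, -1, -1;
         -a, lam + 1 - a, -2 * a, -2 * a, -2 * a;
         -b, -2 * b, lam + 1 - b, -2 * b, -2 * b;
         -c, -2 * c, -2 * c, lam + 1 - c, -2 * c;
         -d, -2 * d, -2 * d, -2 * d, lam + 1 - d] := by
    ext i j
    fin_cases i <;> fin_cases j <;> simp [cliqueDist, one_apply] <;> ring
  rw [hentries]
  simp [det_succ_row_zero, Fin.sum_univ_succ, Fin.succAbove]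
  ring

theorem charpoly_joinCliques4 (n₁ n₂ n₃ n₄ : ℕ)
    (h₁ : 1 ≤ n₁) (h₂ : 1 ≤ n₂) (h₃ : 1 ≤ n₃) (h₄ : 1 ≤ n₄) (lam : ℝ) :
    (lam • (1 : Matrix (Fin 1 ⊕ (Fin n₁ ⊕ (Fin n₂ ⊕ (Fin n₃ ⊕ Fin n₄))))
          (Fin 1 ⊕ (Fin n₁ ⊕ (Fin n₂ ⊕ (Fin n₃ ⊕ Fin n₄)))) ℝ)
        - distMatrix (joinCliques4 n₁ n₂ n₃ n₄)).det =
      (lam + 1) ^ (n₁ + n₂ + n₃ + n₄ + 1 - 5) *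
        (let e₁ : ℝ := (n₁ : ℝ) + n₂ + n₃ + n₄
         let e₂ : ℝ := (n₁ : ℝ) * n₂ + n₁ * n₃ + n₁ * n₄ + n₂ * n₃ + n₂ * n₄ + n₃ * n₄
         let e₃ : ℝ := (n₁ : ℝ) * n₂ * n₃ + n₁ * n₂ * n₄ + n₁ * n₃ * n₄ + n₂ * n₃ * n₄
         let e₄ : ℝ := (n₁ : ℝ) * n₂ * n₃ * n₄
         lam ^ 5 - (e₁ - 4) * lam ^ 4 - (3 * e₂ + 4 * e₁ - 6) * lam ^ 3
           - (5 * e₃ + 8 * e₂ + 6 * e₁ - 4) * lam ^ 2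
           - (7 * e₄ + 8 * e₃ + 7 * e₂ + 4 * e₁ - 1) * lam
           - (4 * e₄ + 3 * e₃ + 2 * e₂ + e₁)) := by
  have hcard : Fintype.card (Fin 1 ⊕ (Fin n₁ ⊕ (Fin n₂ ⊕ (Fin n₃ ⊕ Fin n₄)))) =
      n₁ + n₂ + n₃ + n₄ + 1 := by
    simp only [Fintype.card_sum, Fintype.card_fin]
    ring
  have hle : Fintype.card (Fin 5) ≤ n₁ + n₂ + n₃ + n₄ + 1 := by
    rw [Fintype.card_fin]
    omega
  have hfactor : lam • 1 - distMatrix (joinCliques4 n₁ n₂ n₃ n₄) =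
      (lam + 1) • 1 - cliqueDist.submatrix (cliqueIndex n₁ n₂ n₃ n₄) id *
        (1 : Matrix (Fin 5) (Fin 5) ℝ).submatrix id (cliqueIndex n₁ n₂ n₃ n₄) := by
    rw [distMatrix_joinCliques4, mul_one_submatrix_id, submatrix_submatrix, Function.comp_id,
      Function.id_comp, add_smul, one_smul]
    abel
  rw [hfactor, det_smul_one_sub_mul_comm _ _ (hcard ▸ hle), one_submatrix_id_mul_submatrix,
    card_filter_cliqueIndex_eq, det_add_one_smul_one_sub_diagonal_mul_cliqueDist, hcard,
    Fintype.card_fin]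
end

section
/- The second distance eigenvalue of the graph K₁∨(2K₂∪2K₃) equals √2 − 2. -/
open Polynomial Matrix Finset

lemma charpoly_similar {n R : Type*} [Fintype n] [DecidableEq n] [CommRing R]
    (P A Q : Matrix n n R) (hPQ : P * Q = 1) :
    (P * A * Q).charpoly = A.charpoly := by
  set f := (C : R →+* R[X])
  have h1 : f.mapMatrix P * f.mapMatrix Q = 1 := by
    rw [← _root_.map_mul, hPQ, _root_.map_one]
  have hc : charmatrix (P * A * Q) =
      f.mapMatrix P * charmatrix A * f.mapMatrix Q := by
    unfold charmatrix
    rw [mul_sub, sub_mul]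
    congr 1
    · rw [mul_assoc, (scalar_commute (X : R[X]) (fun r' => Commute.all _ _) (f.mapMatrix Q)).eq,
        ← mul_assoc, h1, one_mul]
    · rw [← _root_.map_mul, ← _root_.map_mul]
  unfold Matrix.charpoly
  rw [hc, Matrix.det_mul_right_comm, h1, one_mul]

lemma charpoly_diag {n R : Type*} [Fintype n] [DecidableEq n] [CommRing R] (d : n → R) :
    (Matrix.diagonal d).charpoly = ∏ i, (X - C (d i)) := by
  have h : charmatrix (Matrix.diagonal d) = Matrix.diagonal (fun i => X - C (d i)) := by
    ext i j
    by_cases hij : i = j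
    · subst hij; simp
    · simp [charmatrix_apply_ne _ _ _ hij, Matrix.diagonal_apply_ne _ hij,
        Matrix.diagonal_apply_ne _ hij]
  unfold Matrix.charpoly
  rw [h, Matrix.det_diagonal]

lemma eigs_eq_roots {n : Type*} [Fintype n] [DecidableEq n] (A : Matrix n n ℝ)
    (hA : A.IsHermitian) :
    Finset.univ.val.map hA.eigenvalues = A.charpoly.roots := by
  have hsp := hA.spectral_theorem
  set U : Matrix n n ℝ := (Matrix.IsHermitian.eigenvectorUnitary hA : Matrix n n ℝ) with hU
  have h1 : U * star U = 1 :=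
    Matrix.mem_unitaryGroup_iff.mp (Matrix.IsHermitian.eigenvectorUnitary hA).2
  have hd : (RCLike.ofReal ∘ hA.eigenvalues : n → ℝ) = hA.eigenvalues := by
    ext i; simp [RCLike.ofReal_real_eq_id]
  have hcp : A.charpoly = (Matrix.diagonal hA.eigenvalues).charpoly := by
    conv_lhs => rw [hsp]
    rw [Unitary.conjStarAlgAut_apply, hd, charpoly_similar _ _ _ h1]
  rw [hcp, charpoly_diag]
  have : ∏ i, (X - C (hA.eigenvalues i)) =
      ((Finset.univ.val.map hA.eigenvalues).map fun a => X - C a).prod := by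
    rw [Multiset.map_map]; rfl
  rw [this, Polynomial.roots_multiset_prod_X_sub_C]

lemma dist_two {V : Type*} (G : SimpleGraph V) {u v w : V} (huv : ¬ G.Adj u v) (hne : u ≠ v)
    (h1 : G.Adj u w) (h2 : G.Adj w v) : G.dist u v = 2 := by
  have hle : G.dist u v ≤ 2 := by
    simpa using SimpleGraph.dist_le (SimpleGraph.Walk.cons h1 (SimpleGraph.Walk.cons h2 SimpleGraph.Walk.nil))
  have h0 : G.dist u v ≠ 0 := by
    rw [SimpleGraph.dist_ne_zero_iff_ne_and_reachable]
    exact ⟨hne, ⟨SimpleGraph.Walk.cons h1 (SimpleGraph.Walk.cons h2 SimpleGraph.Walk.nil)⟩⟩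
  have h1' : G.dist u v ≠ 1 := fun h => huv (SimpleGraph.dist_eq_one_iff_adj.mp h)
  omega

lemma dist_formula {V : Type*} (G : SimpleGraph V)
    (hub : ∀ u v : V, u ≠ v → ¬ G.Adj u v → ∃ w, G.Adj u w ∧ G.Adj w v)
    (u v : V) [Decidable (u = v)] [Decidable (G.Adj u v)] :
    G.dist u v = if u = v then 0 else if G.Adj u v then 1 else 2 := by
  split_ifs with h1 h2
  · subst h1; exact SimpleGraph.dist_self
  · exact SimpleGraph.dist_eq_one_iff_adj.mpr h2
  · obtain ⟨w, hw1, hw2⟩ := hub u v h1 h2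
    exact dist_two G h2 h1 hw1 hw2

abbrev Vt := Fin 1 ⊕ ((Fin 2 ⊕ Fin 2) ⊕ (Fin 3 ⊕ Fin 3))

abbrev Gg : SimpleGraph Vt :=
  graphJoin (⊤ : SimpleGraph (Fin 1))
    (graphSum (graphSum (⊤ : SimpleGraph (Fin 2)) (⊤ : SimpleGraph (Fin 2)))
      (graphSum (⊤ : SimpleGraph (Fin 3)) (⊤ : SimpleGraph (Fin 3))))

instance ggAdjDec : DecidableRel Gg.Adj := fun u v =>
  match u, v with
  | .inl a, .inl b => inferInstanceAs (Decidable ((⊤ : SimpleGraph (Fin 1)).Adj a b))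
  | .inl _, .inr _ => .isTrue trivial
  | .inr _, .inl _ => .isTrue trivial
  | .inr (.inl (.inl a)), .inr (.inl (.inl b)) =>
      inferInstanceAs (Decidable ((⊤ : SimpleGraph (Fin 2)).Adj a b))
  | .inr (.inl (.inl _)), .inr (.inl (.inr _)) => .isFalse fun h => h
  | .inr (.inl (.inl _)), .inr (.inr _) => .isFalse fun h => h
  | .inr (.inl (.inr _)), .inr (.inl (.inl _)) => .isFalse fun h => h
  | .inr (.inl (.inr a)), .inr (.inl (.inr b)) =>
      inferInstanceAs (Decidable ((⊤ : SimpleGraph (Fin 2)).Adj a b))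
  | .inr (.inl (.inr _)), .inr (.inr _) => .isFalse fun h => h
  | .inr (.inr _), .inr (.inl _) => .isFalse fun h => h
  | .inr (.inr (.inl a)), .inr (.inr (.inl b)) =>
      inferInstanceAs (Decidable ((⊤ : SimpleGraph (Fin 3)).Adj a b))
  | .inr (.inr (.inl _)), .inr (.inr (.inr _)) => .isFalse fun h => h
  | .inr (.inr (.inr _)), .inr (.inr (.inl _)) => .isFalse fun h => h
  | .inr (.inr (.inr a)), .inr (.inr (.inr b)) =>
      inferInstanceAs (Decidable ((⊤ : SimpleGraph (Fin 3)).Adj a b))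

lemma gg_hub : ∀ u v : Vt, u ≠ v → ¬ Gg.Adj u v → ∃ w, Gg.Adj u w ∧ Gg.Adj w v := by
  rintro (u | u) (v | v) hne hna
  · exact absurd (congrArg Sum.inl (Subsingleton.elim u v)) hne
  · exact absurd trivial hna
  · exact absurd trivial hna
  · exact ⟨Sum.inl 0, trivial, trivial⟩

def Pf : Matrix (Fin 11) (Fin 11) ℤ :=
  !![1,0,0,0,0,0,0,0,0,0,0;
     0,1,0,1,0,0,0,0,0,1,0;
     0,1,0,-1,0,0,0,0,0,1,0;
     0,1,0,0,1,0,0,0,0,-1,0;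
     0,1,0,0,-1,0,0,0,0,-1,0;
     0,0,1,0,0,1,1,0,0,0,1;
     0,0,1,0,0,-1,0,0,0,0,1;
     0,0,1,0,0,0,-1,0,0,0,1;
     0,0,1,0,0,0,0,1,1,0,-1;
     0,0,1,0,0,0,0,-1,0,0,-1;
     0,0,1,0,0,0,0,0,-1,0,-1]

def Qf : Matrix (Fin 11) (Fin 11) ℤ :=
  !![12,0,0,0,0,0,0,0,0,0,0;
     0,3,3,3,3,0,0,0,0,0,0;
     0,0,0,0,0,2,2,2,2,2,2;
     0,6,-6,0,0,0,0,0,0,0,0;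
     0,0,0,6,-6,0,0,0,0,0,0;
     0,0,0,0,0,4,-8,4,0,0,0;
     0,0,0,0,0,4,4,-8,0,0,0;
     0,0,0,0,0,0,0,0,4,-8,4;
     0,0,0,0,0,0,0,0,4,4,-8;
     0,3,3,-3,-3,0,0,0,0,0,0;
     0,0,0,0,0,2,2,2,-2,-2,-2]

def Df : Matrix (Fin 11) (Fin 11) ℤ :=
  !![0,1,1,1,1,1,1,1,1,1,1;
     1,0,1,2,2,2,2,2,2,2,2;
     1,1,0,2,2,2,2,2,2,2,2;
     1,2,2,0,1,2,2,2,2,2,2;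
     1,2,2,1,0,2,2,2,2,2,2;
     1,2,2,2,2,0,1,1,2,2,2;
     1,2,2,2,2,1,0,1,2,2,2;
     1,2,2,2,2,1,1,0,2,2,2;
     1,2,2,2,2,2,2,2,0,1,1;
     1,2,2,2,2,2,2,2,1,0,1;
     1,2,2,2,2,2,2,2,1,1,0]

def idx : Vt → Fin 11
  | .inl _ => 0
  | .inr (.inl (.inl i)) => ⟨1 + i.val, by omega⟩
  | .inr (.inl (.inr i)) => ⟨3 + i.val, by omega⟩
  | .inr (.inr (.inl i)) => ⟨5 + i.val, by omega⟩
  | .inr (.inr (.inr i)) => ⟨8 + i.val, by omega⟩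

def jdx : Fin 11 → Vt :=
  ![.inl 0, .inr (.inl (.inl 0)), .inr (.inl (.inl 1)), .inr (.inl (.inr 0)), .inr (.inl (.inr 1)),
    .inr (.inr (.inl 0)), .inr (.inr (.inl 1)), .inr (.inr (.inl 2)),
    .inr (.inr (.inr 0)), .inr (.inr (.inr 1)), .inr (.inr (.inr 2))]

def Pm : Matrix Vt Vt ℤ := Matrix.of fun u v => Pf (idx u) (idx v)
def Qm : Matrix Vt Vt ℤ := Matrix.of fun u v => Qf (idx u) (idx v)
def Dm : Matrix Vt Vt ℤ := Matrix.of fun u v => Df (idx u) (idx v)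

def Bmz : Matrix (Fin 3) (Fin 3) ℤ := !![0,4,6;1,5,12;1,8,8]
def ddz : Fin 8 → ℤ := ![-1,-1,-1,-1,-1,-1,-3,-4]

def eqv : (Fin 3 ⊕ Fin 8) ≃ Vt where
  toFun x := jdx (finSumFinEquiv x)
  invFun v := finSumFinEquiv.symm (idx v)
  left_inv := by decide
  right_inv := by decide

def BDz : Matrix Vt Vt ℤ := Matrix.reindex eqv eqv (Matrix.fromBlocks Bmz 0 0 (Matrix.diagonal ddz))

set_option maxRecDepth 100000 in
lemma hPQ : Pm * Qm = Matrix.diagonal (fun _ => (12:ℤ)) := by decide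

set_option maxRecDepth 100000 in
lemma hPBQ : Pm * BDz * Qm = Matrix.diagonal (fun _ => (12:ℤ)) * Dm := by decide

set_option maxRecDepth 100000 in
lemma hDm : ∀ u v : Vt, (if u = v then (0:ℤ) else if Gg.Adj u v then 1 else 2) = Dm u v := by
  simp only [Dm, Matrix.of_apply]; decide

noncomputable abbrev cR : ℤ →+* ℝ := Int.castRingHom ℝ

lemma hmapDiag12 : (cR.mapMatrix (Matrix.diagonal (fun _ : Vt => (12:ℤ)))) =
    (12:ℝ) • (1 : Matrix Vt Vt ℝ) := by
  ext u v
  by_cases h : u = v <;>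
    simp [RingHom.mapMatrix_apply, Matrix.map_apply, Matrix.diagonal, Matrix.one_apply, h]

lemma key1 : cR.mapMatrix Pm * ((12:ℝ)⁻¹ • cR.mapMatrix Qm) = 1 := by
  rw [Matrix.mul_smul, ← _root_.map_mul, hPQ, hmapDiag12, smul_smul]
  norm_num

lemma key2 : cR.mapMatrix Pm * cR.mapMatrix BDz * ((12:ℝ)⁻¹ • cR.mapMatrix Qm)
    = cR.mapMatrix Dm := by
  rw [Matrix.mul_smul, ← _root_.map_mul, ← _root_.map_mul, hPBQ, _root_.map_mul, hmapDiag12,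
    smul_mul_assoc, one_mul, smul_smul]
  norm_num

lemma hdistD : distMatrix Gg = cR.mapMatrix Dm := by
  ext u v
  simp only [distMatrix, Matrix.of_apply, RingHom.mapMatrix_apply, Matrix.map_apply]
  rw [dist_formula Gg gg_hub u v, ← hDm u v]
  split_ifs <;> norm_num

lemma hcp1 : (distMatrix Gg).charpoly = (cR.mapMatrix BDz).charpoly := by
  rw [hdistD, ← key2]
  exact charpoly_similar _ _ _ key1

lemma hBD : cR.mapMatrix BDz = Matrix.reindex eqv eqv
    (Matrix.fromBlocks (cR.mapMatrix Bmz) 0 0 (Matrix.diagonal (fun i => (ddz i : ℝ)))) := by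
  ext u v
  simp only [BDz, RingHom.mapMatrix_apply, Matrix.map_apply, Matrix.reindex_apply,
    Matrix.submatrix_apply]
  rcases heq : (eqv.symm u) with i | i <;> rcases heq2 : (eqv.symm v) with j | j <;>
    simp [Matrix.fromBlocks, Matrix.diagonal, apply_ite] <;> aesop

lemma hcp2 : (cR.mapMatrix BDz).charpoly =
    (cR.mapMatrix Bmz).charpoly * (Matrix.diagonal (fun i => (ddz i : ℝ))).charpoly := by
  rw [hBD, Matrix.charpoly_reindex, Matrix.charpoly_fromBlocks_zero₁₂]

lemma sqrt2_mul : Real.sqrt 2 * Real.sqrt 2 = 2 := Real.mul_self_sqrt (by norm_num)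

lemma hfac : (X - C (Real.sqrt 2 - 2)) * (X - C (-2 - Real.sqrt 2)) =
    X ^ 2 + C 4 * X + C 2 := by
  have h1 : (Real.sqrt 2 - 2) + (-2 - Real.sqrt 2) = -4 := by ring
  have h2 : (Real.sqrt 2 - 2) * (-2 - Real.sqrt 2) = 2 := by nlinarith [sqrt2_mul]
  have e : (X - C (Real.sqrt 2 - 2)) * (X - C (-2 - Real.sqrt 2)) =
      X ^ 2 - C ((Real.sqrt 2 - 2) + (-2 - Real.sqrt 2)) * X
        + C ((Real.sqrt 2 - 2) * (-2 - Real.sqrt 2)) := by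
    rw [C_add, C_mul]; ring
  rw [e, h1, h2]
  simp only [map_neg, map_ofNat]
  ring

lemma hcpB : (cR.mapMatrix Bmz).charpoly =
    (X - C 17) * ((X - C (Real.sqrt 2 - 2)) * (X - C (-2 - Real.sqrt 2))) := by
  unfold Matrix.charpoly
  rw [Matrix.det_fin_three, hfac]
  simp only [charmatrix_apply, RingHom.mapMatrix_apply, Matrix.map_apply, Bmz]
  norm_num [Matrix.diagonal_apply, Fin.ext_iff, Matrix.cons_val_succ, map_ofNat,
    Polynomial.C_0, Polynomial.C_1]
  norm_num [Matrix.vecHead, Matrix.vecTail]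
  norm_num [Matrix.cons_val_two, Matrix.cons_val_one, Matrix.head_cons]
  ring

lemma hcpDiag : (Matrix.diagonal (fun i => ((ddz i : ℤ) : ℝ))).charpoly =
    (X - C (-1)) ^ 6 * ((X - C (-3)) * (X - C (-4))) := by
  rw [charpoly_diag]
  simp only [Fin.prod_univ_succ, Fin.prod_univ_zero, ddz, Matrix.cons_val_succ,
    Matrix.cons_val_zero, Int.cast_neg, Int.cast_one, Int.cast_ofNat, mul_one]
  push_cast
  ring

noncomputable def Lr : List ℝ :=
  [-4, -2 - Real.sqrt 2, -3, -1, -1, -1, -1, -1, -1, Real.sqrt 2 - 2, 17]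

lemma hcharpoly : (distMatrix Gg).charpoly = ((↑Lr : Multiset ℝ).map fun a => X - C a).prod := by
  rw [hcp1, hcp2, hcpB, hcpDiag]
  simp only [Lr, Multiset.map_coe, Multiset.prod_coe, List.map_cons,
    List.map_nil, List.prod_cons, List.prod_nil]
  simp only [map_neg, map_ofNat, Polynomial.C_1, _root_.map_one, map_sub]
  ring

lemma hroots : Finset.univ.val.map (distMatrix_isHermitian Gg).eigenvalues = (↑Lr : Multiset ℝ) := by
  rw [eigs_eq_roots _ (distMatrix_isHermitian Gg), hcharpoly,
    Polynomial.roots_multiset_prod_X_sub_C]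

lemma hsorted : Lr.Pairwise (· ≤ ·) := by
  have h0 := Real.sqrt_nonneg 2
  have hm := sqrt2_mul
  have h1 : (1:ℝ) ≤ Real.sqrt 2 := by nlinarith
  have h2 : Real.sqrt 2 ≤ 3/2 := by nlinarith
  simp [Lr, List.pairwise_cons]
  norm_num
  repeat' apply And.intro
  all_goals nlinarith

lemma hsort : Multiset.sort (↑Lr : Multiset ℝ) (· ≤ ·) = Lr :=
  List.Perm.eq_of_pairwise' (Multiset.pairwise_sort _ _) hsorted
    (Multiset.coe_eq_coe.mp (Multiset.sort_eq _ _))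

theorem secondDistEig_join_2K2_2K3 :
    distEig (graphJoin (⊤ : SimpleGraph (Fin 1))
        (graphSum (graphSum (⊤ : SimpleGraph (Fin 2)) (⊤ : SimpleGraph (Fin 2)))
          (graphSum (⊤ : SimpleGraph (Fin 3)) (⊤ : SimpleGraph (Fin 3))))) 2 =
      Real.sqrt 2 - 2 := by
  show distEig Gg 2 = Real.sqrt 2 - 2
  unfold distEig distEigMultiset
  rw [hroots, hsort]
  norm_num [Lr, List.getD]
end
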